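/- Let G be a finite, r-regular, connected, bipartite graph with bipartition V = A ∪ B, and let α = 1. Then every point of Ω is an equilibrium of F, and for every equilibrium v ∈ Λ with v ∉ Ω there exists an index i with v_i = 0 and ∂L/∂v_i(v) = -1 + (1/N) Σ_{j ∼ i} 1/(v_i + v_j) > 0; in particular every element of Λ \ Ω is an unstable equilibrium. -/

import Mathlib

open MeasureTheory Filter Topology

/-- The domain `Δ`: nonnegative vectors summing to `1` whose coordinates sum to at least `c`
on every edge of `G`. -/
def simplexDomain (m : ℕ) (G : SimpleGraph (Fin m)) (c : ℝ) : Set (Fin m → ℝ) :=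
  {x | (∀ i, 0 ≤ x i) ∧ (∑ i, x i) = 1 ∧ ∀ i j, G.Adj i j → c ≤ x i + x j}

/-- The vector field `F` of the urn process:
`F_i(x) = -x_i + (1/N) ∑_{j ∼ i} x_i^α / (x_i^α + x_j^α)`. -/
noncomputable def urnField (m : ℕ) (G : SimpleGraph (Fin m)) [DecidableRel G.Adj] (α : ℝ)
    (x : Fin m → ℝ) : Fin m → ℝ :=
  fun i => -x i + (1 / (G.edgeFinset.card : ℝ)) *
    ∑ j ∈ G.neighborFinset i, x i ^ α / (x i ^ α + x j ^ α)

/-- The equilibria set `Λ` of the vector field `F` on `Δ`. -/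
def equilibria (m : ℕ) (G : SimpleGraph (Fin m)) [DecidableRel G.Adj] (α c : ℝ) :
    Set (Fin m → ℝ) :=
  {x ∈ simplexDomain m G c | urnField m G α x = 0}

/-- The partial derivative `∂L/∂v_i (v) = -1 + (1/N) ∑_{j ∼ i} v_i^(α-1) / (v_i^α + v_j^α)`
of the Lyapunov function `L`. -/
noncomputable def lyapGrad (m : ℕ) (G : SimpleGraph (Fin m)) [DecidableRel G.Adj] (α : ℝ)
    (v : Fin m → ℝ) (i : Fin m) : ℝ :=
  -1 + (1 / (G.edgeFinset.card : ℝ)) *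
    ∑ j ∈ G.neighborFinset i, v i ^ (α - 1) / (v i ^ α + v j ^ α)

/-- The set `Ω` associated to a bipartition `V = A ∪ Aᶜ`: vectors constant equal to some
`p ≥ 0` on `A` and to some `q ≥ 0` on `Aᶜ`, with `p + q = 2/m`. -/
def bipartiteOmega (m : ℕ) (A : Finset (Fin m)) : Set (Fin m → ℝ) :=
  {x | ∃ p q : ℝ, 0 ≤ p ∧ 0 ≤ q ∧ p + q = 2 / (m : ℝ) ∧
    (∀ i, i ∈ A → x i = p) ∧ (∀ i, i ∉ A → x i = q)}

/-!
At `α = 1` the field factors as `F_i(v) = v_i · ∂L/∂v_i(v)`. On `Ω` every edge sum `v_i + v_j`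
equals `2/m`, and since `m r = 2N` this makes every `∂L/∂v_i` vanish. Conversely, if an
equilibrium had `∂L/∂v_i(v) ≤ 0` at each of its zeros, then `∑_{j ∼ i} 1/(v_i + v_j) ≤ N` at every
vertex. Summing `(s - 2/m)^2 / s ≥ 0` over the oriented edges, where `s = v_i + v_j`,
`∑ s = 2r` and `∑ 1/s ≤ mN`, gives a total `≤ 0`; so every edge sum is `2/m`, and by
connectedness and bipartiteness `v` is constant on each side, i.e. `v ∈ Ω`.
-/

open Finset

namespace SimpleGraph

variable {V : Type*} {G : SimpleGraph V}

theorem Connected.eq_of_forall_adj_eq {β : Type*} (hconn : G.Connected) {x : V → β}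
    (h : ∀ i j, G.Adj i j → x i = x j) (i j : V) : x i = x j := by
  obtain ⟨w⟩ := hconn i j
  induction w with
  | nil => rfl
  | cons hadj _ ih => exact (h _ _ hadj).trans ih

variable [Fintype V] [DecidableRel G.Adj]

theorem sum_sum_neighborFinset_comm {M : Type*} [AddCommMonoid M] (f : V → V → M) :
    ∑ i, ∑ j ∈ G.neighborFinset i, f i j = ∑ i, ∑ j ∈ G.neighborFinset i, f j i :=
  sum_comm' (by simp [adj_comm])

namespace IsRegularOfDegree

variable {r : ℕ}

theorem card_mul_eq_two_mul_card_edgeFinset [DecidableEq V] (hreg : G.IsRegularOfDegree r) :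
    Fintype.card V * r = 2 * #G.edgeFinset := by
  simpa [hreg _, mul_comm] using G.sum_degrees_eq_twice_card_edges

theorem sum_neighborFinset_const {M : Type*} [AddCommMonoid M] (hreg : G.IsRegularOfDegree r)
    (i : V) (a : M) : ∑ _j ∈ G.neighborFinset i, a = r • a := by
  rw [sum_const, card_neighborFinset_eq_degree, hreg i]

theorem sum_sum_neighborFinset_add (hreg : G.IsRegularOfDegree r) (v : V → ℝ) :
    ∑ i, ∑ j ∈ G.neighborFinset i, (v i + v j) = 2 * r * ∑ i, v i := by
  simp only [sum_add_distrib]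
  rw [sum_sum_neighborFinset_comm (fun _ j => v j)]
  simp only [hreg.sum_neighborFinset_const, nsmul_eq_mul, ← mul_sum]
  ring

theorem card_pos_and_pos [DecidableEq V] (hreg : G.IsRegularOfDegree r)
    (hN : 0 < #G.edgeFinset) : 0 < Fintype.card V ∧ 0 < r := by
  rw [← CanonicallyOrderedAdd.mul_pos, hreg.card_mul_eq_two_mul_card_edgeFinset]
  omega

theorem one_div_card_edgeFinset_le [DecidableEq V] (hreg : G.IsRegularOfDegree r)
    (hN : 0 < #G.edgeFinset) : 1 / (#G.edgeFinset : ℝ) ≤ 2 / Fintype.card V := by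
  obtain ⟨hV, hr⟩ := hreg.card_pos_and_pos hN
  rw [div_le_div_iff₀ (by exact_mod_cast hN) (by exact_mod_cast hV), one_mul]
  exact_mod_cast hreg.card_mul_eq_two_mul_card_edgeFinset ▸ Nat.le_mul_of_pos_right _ hr

theorem sum_eq_one_of_adj_add_eq [DecidableEq V] (hreg : G.IsRegularOfDegree r)
    (hN : 0 < #G.edgeFinset) {v : V → ℝ}
    (hsum : ∀ i j, G.Adj i j → v i + v j = 2 / Fintype.card V) : ∑ i, v i = 1 := by
  obtain ⟨hV, hr⟩ := hreg.card_pos_and_pos hN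
  have h := hreg.sum_sum_neighborFinset_add v
  rw [sum_congr rfl fun i _ => sum_congr rfl fun j hj =>
    hsum i j ((G.mem_neighborFinset i j).mp hj)] at h
  simp only [hreg.sum_neighborFinset_const, sum_const, card_univ, nsmul_eq_mul] at h
  field_simp at h
  exact h.symm

theorem sum_sum_neighborFinset_sq_div_nonpos [DecidableEq V] (hreg : G.IsRegularOfDegree r)
    {v : V → ℝ} (hsum : ∑ i, v i = 1) (hpos : ∀ i j, G.Adj i j → 0 < v i + v j)
    (hinv : ∀ i, ∑ j ∈ G.neighborFinset i, 1 / (v i + v j) ≤ #G.edgeFinset) :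
    ∑ i, ∑ j ∈ G.neighborFinset i, (v i + v j - 2 / Fintype.card V) ^ 2 / (v i + v j) ≤ 0 := by
  have hn : (Fintype.card V : ℝ) ≠ 0 := by
    have : (univ : Finset V).Nonempty := nonempty_of_sum_ne_zero (by rw [hsum]; exact one_ne_zero)
    exact Nat.cast_ne_zero.mpr (card_pos.mpr this).ne'
  have hnr : (Fintype.card V : ℝ) * r = 2 * #G.edgeFinset := by
    exact_mod_cast hreg.card_mul_eq_two_mul_card_edgeFinset
  set a : ℝ := 2 / Fintype.card V
  have hexpand : ∀ i, ∀ j ∈ G.neighborFinset i, (v i + v j - a) ^ 2 / (v i + v j) =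
      (v i + v j) - 2 * a + a ^ 2 * (1 / (v i + v j)) := by
    intro i j hj
    have := (hpos i j ((G.mem_neighborFinset i j).mp hj)).ne'
    field_simp
    ring
  calc
    _ = ∑ i, ∑ j ∈ G.neighborFinset i, (v i + v j) - Fintype.card V * (r * (2 * a)) +
        a ^ 2 * ∑ i, ∑ j ∈ G.neighborFinset i, 1 / (v i + v j) := by
      simp only [sum_congr rfl fun i _ => sum_congr rfl (hexpand i), sum_add_distrib,
        sum_sub_distrib, hreg.sum_neighborFinset_const, ← mul_sum, sum_const, card_univ,
        nsmul_eq_mul]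
      ring
    _ ≤ 2 * r * 1 - Fintype.card V * (r * (2 * a)) + a ^ 2 * ∑ _i : V, (#G.edgeFinset : ℝ) := by
      rw [hreg.sum_sum_neighborFinset_add, hsum]; gcongr with i; exact hinv i
    _ = 0 := by
      simp only [sum_const, card_univ, nsmul_eq_mul, a]
      field_simp
      linear_combination (-2) * hnr

theorem adj_add_eq_of_sum_inv_le [DecidableEq V] (hreg : G.IsRegularOfDegree r) {v : V → ℝ}
    (hsum : ∑ i, v i = 1) (hpos : ∀ i j, G.Adj i j → 0 < v i + v j)
    (hinv : ∀ i, ∑ j ∈ G.neighborFinset i, 1 / (v i + v j) ≤ #G.edgeFinset) :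
    ∀ i j, G.Adj i j → v i + v j = 2 / Fintype.card V := by
  have hterm_nonneg : ∀ i, ∀ j ∈ G.neighborFinset i,
      0 ≤ (v i + v j - 2 / Fintype.card V) ^ 2 / (v i + v j) :=
    fun i j hj => div_nonneg (sq_nonneg _) (hpos i j ((G.mem_neighborFinset i j).mp hj)).le
  have htotal := (hreg.sum_sum_neighborFinset_sq_div_nonpos hsum hpos hinv).antisymm
    (sum_nonneg fun i _ => sum_nonneg (hterm_nonneg i))
  intro i j hadj
  have hzero := (sum_eq_zero_iff_of_nonneg (hterm_nonneg i)).mp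
    ((sum_eq_zero_iff_of_nonneg fun i _ => sum_nonneg (hterm_nonneg i)).mp htotal i (mem_univ i))
    j ((G.mem_neighborFinset i j).mpr hadj)
  rw [div_eq_zero_iff, sq_eq_zero_iff, sub_eq_zero] at hzero
  exact hzero.resolve_right (hpos i j hadj).ne'

end IsRegularOfDegree

end SimpleGraph

section UrnField

variable {m : ℕ} {G : SimpleGraph (Fin m)} [DecidableRel G.Adj]

theorem lyapGrad_one (v : Fin m → ℝ) (i : Fin m) :
    lyapGrad m G 1 v i = -1 + 1 / #G.edgeFinset * ∑ j ∈ G.neighborFinset i, 1 / (v i + v j) := by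
  simp [lyapGrad]

theorem urnField_one_eq_mul_lyapGrad (v : Fin m → ℝ) (i : Fin m) :
    urnField m G 1 v i = v i * lyapGrad m G 1 v i := by
  rw [lyapGrad_one, mul_add, mul_neg_one, mul_left_comm, mul_sum]
  simp only [urnField, Real.rpow_one, mul_one_div]

theorem lyapGrad_one_eq_zero_of_adj_add_eq {r : ℕ} (hreg : G.IsRegularOfDegree r)
    (hN : 0 < #G.edgeFinset) {v : Fin m → ℝ} (hsum : ∀ i j, G.Adj i j → v i + v j = 2 / m)
    (i : Fin m) : lyapGrad m G 1 v i = 0 := by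
  have hmr : (m : ℝ) * r = 2 * #G.edgeFinset := by
    simpa using congrArg (Nat.cast (R := ℝ)) hreg.card_mul_eq_two_mul_card_edgeFinset
  have hm : (m : ℝ) ≠ 0 := by simpa using (hreg.card_pos_and_pos hN).1.ne'
  rw [lyapGrad_one, sum_congr rfl fun j hj => by rw [hsum i j ((G.mem_neighborFinset i j).mp hj)],
    hreg.sum_neighborFinset_const, nsmul_eq_mul]
  field_simp
  linear_combination hmr

theorem lyapGrad_one_eq_zero_of_urnField_eq_zero {v : Fin m → ℝ} {i : Fin m}
    (hF : urnField m G 1 v i = 0) (hvi : v i ≠ 0) : lyapGrad m G 1 v i = 0 := by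
  rw [urnField_one_eq_mul_lyapGrad] at hF
  exact (mul_eq_zero.mp hF).resolve_left hvi

theorem lyapGrad_one_nonpos_iff (hN : 0 < #G.edgeFinset) (v : Fin m → ℝ) (i : Fin m) :
    lyapGrad m G 1 v i ≤ 0 ↔ ∑ j ∈ G.neighborFinset i, 1 / (v i + v j) ≤ #G.edgeFinset := by
  rw [lyapGrad_one, neg_add_nonpos_iff, one_div, inv_mul_le_iff₀ (by exact_mod_cast hN), mul_one]

theorem mem_equilibria_of_adj_add_eq {r : ℕ} {c : ℝ} (hreg : G.IsRegularOfDegree r)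
    (hN : 0 < #G.edgeFinset) (hc : c ≤ 2 / m) {v : Fin m → ℝ} (hv0 : ∀ i, 0 ≤ v i)
    (hsum : ∀ i j, G.Adj i j → v i + v j = 2 / m) : v ∈ equilibria m G 1 c := by
  refine ⟨⟨hv0, hreg.sum_eq_one_of_adj_add_eq hN (by simpa using hsum),
    fun i j hij => hsum i j hij ▸ hc⟩, funext fun i => ?_⟩
  rw [urnField_one_eq_mul_lyapGrad, lyapGrad_one_eq_zero_of_adj_add_eq hreg hN hsum, mul_zero,
    Pi.zero_apply]

end UrnField

section BipartiteOmega

variable {m : ℕ} {A : Finset (Fin m)} {v : Fin m → ℝ}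

theorem nonneg_of_mem_bipartiteOmega (hv : v ∈ bipartiteOmega m A) (i : Fin m) : 0 ≤ v i := by
  obtain ⟨p, q, hp, hq, -, hvA, hvB⟩ := hv
  by_cases hi : i ∈ A
  · exact hvA i hi ▸ hp
  · exact hvB i hi ▸ hq

variable {G : SimpleGraph (Fin m)}

theorem add_eq_of_mem_bipartiteOmega (hA : ∀ i j, G.Adj i j → (i ∈ A ↔ j ∉ A))
    (hv : v ∈ bipartiteOmega m A) {i j : Fin m} (hadj : G.Adj i j) : v i + v j = 2 / m := by
  obtain ⟨p, q, -, -, hpq, hvA, hvB⟩ := hv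
  by_cases hi : i ∈ A
  · rw [hvA i hi, hvB j ((hA i j hadj).mp hi), hpq]
  · rw [hvB i hi, hvA j (not_not.mp ((hA i j hadj).not.mp hi)), add_comm, hpq]

theorem mem_bipartiteOmega_of_adj_add_eq (hconn : G.Connected)
    (hA : ∀ i j, G.Adj i j → (i ∈ A ↔ j ∉ A)) (hv0 : ∀ i, 0 ≤ v i)
    (hsum : ∀ i j, G.Adj i j → v i + v j = 2 / m) {a b : Fin m} (hab : G.Adj a b) :
    v ∈ bipartiteOmega m A := by
  wlog ha : a ∈ A generalizing a b
  · exact this hab.symm (not_not.mp ((hA a b hab).not.mp ha))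
  let w i := if i ∈ A then v i else 2 / m - v i
  have hw : ∀ i j, G.Adj i j → w i = w j := by
    intro i j hij
    have := hsum i j hij
    by_cases hi : i ∈ A
    · simp only [w, hi, (hA i j hij).mp hi, if_true, if_false]; linarith
    · simp only [w, hi, not_not.mp ((hA i j hij).not.mp hi), if_true, if_false]; linarith
  refine ⟨v a, v b, hv0 a, hv0 b, hsum a b hab, fun i hi => ?_, fun i hi => ?_⟩
  · simpa [w, hi, ha] using hconn.eq_of_forall_adj_eq hw i a
  · have := hconn.eq_of_forall_adj_eq hw i a
    simp only [w, hi, ha, if_true, if_false] at this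
    linarith [hsum a b hab]

end BipartiteOmega

/-- **Lemma (regular bipartite, `α = 1`).** Every point of `Ω` is an equilibrium of `F`, and
for every equilibrium `v ∈ Λ` with `v ∉ Ω` there is an index `i` with `v_i = 0` and
`∂L/∂v_i(v) > 0`; in particular every element of `Λ \ Ω` is unstable. -/
theorem regular_bipartite_unstable_equilibria
    {m r : ℕ} {G : SimpleGraph (Fin m)} [DecidableRel G.Adj] {c : ℝ}
    (hreg : G.IsRegularOfDegree r) (hconn : G.Connected)
    (A : Finset (Fin m)) (hA : ∀ i j, G.Adj i j → (i ∈ A ↔ j ∉ A))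
    (hc : 0 < c) (hcN : c < 1 / (G.edgeFinset.card : ℝ)) :
    (∀ v ∈ bipartiteOmega m A, v ∈ equilibria m G 1 c) ∧
    (∀ v ∈ equilibria m G 1 c, v ∉ bipartiteOmega m A →
      ∃ i, v i = 0 ∧ 0 < lyapGrad m G 1 v i) := by
  have hN : 0 < #G.edgeFinset := by
    by_contra! h
    rw [Nat.le_zero.mp h, Nat.cast_zero, div_zero] at hcN
    linarith
  constructor
  · intro v hv
    have hcm : c ≤ 2 / m := by simpa using hcN.le.trans (hreg.one_div_card_edgeFinset_le hN)
    exact mem_equilibria_of_adj_add_eq hreg hN hcm (nonneg_of_mem_bipartiteOmega hv)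
      fun _ _ => add_eq_of_mem_bipartiteOmega hA hv
  · rintro v ⟨⟨hv0, hv1, hvc⟩, hF⟩ hvΩ
    by_contra! hgrad
    have hinv (i : Fin m) : ∑ j ∈ G.neighborFinset i, 1 / (v i + v j) ≤ #G.edgeFinset := by
      refine (lyapGrad_one_nonpos_iff hN v i).mp ?_
      rcases (hv0 i).eq_or_lt with hvi | hvi
      · exact hgrad i hvi.symm
      · exact (lyapGrad_one_eq_zero_of_urnField_eq_zero (congrFun hF i) hvi.ne').le
    have hsum := hreg.adj_add_eq_of_sum_inv_le hv1 (fun i j h => hc.trans_le (hvc i j h)) hinv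
    obtain ⟨hm, hr⟩ := hreg.card_pos_and_pos hN
    obtain ⟨a⟩ := Fintype.card_pos_iff.mp hm
    obtain ⟨b, hab⟩ := (G.degree_pos_iff_exists_adj a).mp (hreg a ▸ hr)
    exact hvΩ (mem_bipartiteOmega_of_adj_add_eq hconn hA hv0 (by simpa using hsum) hab)
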